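/- A semistandard tableau T of shape λ with entries in the positive integers is distinguished (i.e. μ-distinguished for some partition μ) if and only if, for every integer i ≥ 1, the skew tableau obtained from T by keeping only the letters 2i-1 and 2i is a reverse lattice skew tableau on {2i-1, 2i}, and all rows of the partition θ(T) = φ(T) + μ_T have even lengths. -/

import Mathlib

open scoped Classical

noncomputable section

namespace GE

/-- The coefficient of the `i`-th fundamental weight (`i ≥ 1`) in the dominant weight
corresponding to the partition `μ`: the number of columns of the Young diagram of `μ`
of height exactly `i`. -/
def coord (μ : YoungDiagram) (i : ℕ) : ℕ := μ.rowLen (i - 1) - μ.rowLen i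

/-- The Japanese reading word of a semistandard Young tableau: columns are read from right
to left, each column from top to bottom. -/
def jword {μ : YoungDiagram} (T : SemistandardYoungTableau μ) : List ℕ :=
  (((List.range (μ.rowLen 0)).reverse).map fun j =>
    (List.range (μ.colLen j)).map fun i => T i j).flatten

/-- The crystal statistic `ε_i` of a word, via the bracketing rule. -/
def wordEps (i : ℕ) (w : List ℕ) : ℕ :=
  (Finset.range (w.length + 1)).sup fun k => (w.take k).count (i + 1) - (w.take k).count i

/-- The crystal statistic `φ_i` of a word, via the bracketing rule. -/
def wordPhi (i : ℕ) (w : List ℕ) : ℕ :=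
  (Finset.range (w.length + 1)).sup fun k => (w.drop k).count i - (w.drop k).count (i + 1)

/-- The crystal statistic `ε_i` of a semistandard tableau. -/
def eps (i : ℕ) {μ : YoungDiagram} (T : SemistandardYoungTableau μ) : ℕ := wordEps i (jword T)

/-- The crystal statistic `φ_i` of a semistandard tableau. -/
def phi (i : ℕ) {μ : YoungDiagram} (T : SemistandardYoungTableau μ) : ℕ := wordPhi i (jword T)

/-- The number of entries of `T` equal to `k`. -/
def cnt {μ : YoungDiagram} (T : SemistandardYoungTableau μ) (k : ℕ) : ℕ := (jword T).count k

/-- All entries of `T` lie in the alphabet `{1, …, m}`. -/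
def EntriesIn {μ : YoungDiagram} (T : SemistandardYoungTableau μ) (m : ℕ) : Prop :=
  ∀ i j, (i, j) ∈ μ → 1 ≤ T i j ∧ T i j ≤ m

/-- All entries of `T` are positive integers. -/
def PosEntries {μ : YoungDiagram} (T : SemistandardYoungTableau μ) : Prop :=
  ∀ i j, (i, j) ∈ μ → 1 ≤ T i j

/-- The partition `ν` has all parts even (`ν ∈ 𝒫^{(2)}`). -/
def EvenParts (ν : YoungDiagram) : Prop := ∀ i, Even (ν.rowLen i)

/-- Every part of `δ` occurs with even multiplicity, i.e. `δ_{2i-1} = δ_{2i}` for all `i ≥ 1`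
(`δ ∈ 𝒫^{(1,1)}`). -/
def EvenMult (δ : YoungDiagram) : Prop := ∀ i, δ.rowLen (2 * i) = δ.rowLen (2 * i + 1)

/-- `b` is `μ`-distinguished: there are `ν ∈ 𝒫^{(2)}` and `δ ∈ 𝒫^{(1,1)}` with
`φ(b) = ν - μ` and `ε(b) = δ - μ`, as equalities of weights written in the basis of the
fundamental weights `ω_i` (a partition `κ` having `ω_i`-coefficient `coord κ i`). -/
def Distinguished {lam : YoungDiagram} (b : SemistandardYoungTableau lam)
    (μ : YoungDiagram) : Prop :=
  ∃ ν δ : YoungDiagram, EvenParts ν ∧ EvenMult δ ∧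
    (∀ i, 1 ≤ i → coord ν i = phi i b + coord μ i) ∧
    (∀ i, 1 ≤ i → coord δ i = eps i b + coord μ i)

/-- The coefficient of `ω_i` in `μ_b = Σ_i (φ_{2i}(b) mod 2) ω_{2i}`. -/
def muBcoord {lam : YoungDiagram} (b : SemistandardYoungTableau lam) (i : ℕ) : ℕ :=
  if Even i ∧ 1 ≤ i then phi i b % 2 else 0

/-- The size `|φ(b) + μ_b|` of the weight `φ(b) + μ_b` (a column of height `i`, i.e. the
fundamental weight `ω_i`, contributing `i` boxes). -/
def statB {lam : YoungDiagram} (b : SemistandardYoungTableau lam) : ℕ :=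
  ∑ᶠ i : ℕ, i * (phi i b + muBcoord b i)

/-- `κ ≤_⊞ μ`, i.e. `μ - κ ∈ 𝒫^{⊞} = 𝒫^{(2)} ∩ 𝒫^{(1,1)}`; in terms of the coefficients of
the fundamental weights: the difference `μ - κ` is nonnegative, vanishes in each odd
coordinate, and is even in each coordinate. -/
def leB (κ μ : YoungDiagram) : Prop :=
  ∀ i, 1 ≤ i → coord κ i ≤ coord μ i ∧ (Odd i → coord κ i = coord μ i) ∧
    Even (coord μ i - coord κ i)

/-! For odd `i` a partition `δ ∈ 𝒫^{(1,1)}` has no columns of height `i`, so `ε(T) = δ - μ` forces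
`ε_i(T) = 0` and `μ_i = 0` at odd `i`; by the bracketing rule, `ε_{2i-1}(T) = 0` says exactly
that the subword of letters `2i-1, 2i` is a lattice word. The odd coordinates of `θ(T)` are then
those of `ν ∈ 𝒫^{(2)}`, hence even, and the even ones are even by the choice of `μ_T`.
Conversely `μ_T`, `φ(T) + μ_T` and `ε(T) + μ_T` are realised by partitions (a row of length
`∑_{k > i} c_k` for each `i`), which lie in `𝒫^{(2)}` and `𝒫^{(1,1)}` respectively. -/

section Words

theorem forall_count_take_filter_le_iff {α : Type*} [DecidableEq α] {P : α → Bool} {a b : α}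
    (ha : P a) (hb : P b) (w : List α) :
    (∀ p, ((w.filter P).take p).count b ≤ ((w.filter P).take p).count a) ↔
      ∀ k, (w.take k).count b ≤ (w.take k).count a := by
  constructor
  · intro h k
    obtain ⟨p, hp⟩ : ∃ p, (w.take k).filter P = (w.filter P).take p :=
      ⟨_, List.prefix_iff_eq_take.mp ((w.take_prefix k).filter P)⟩
    simpa only [← hp, List.count_filter ha, List.count_filter hb] using h p
  · intro h p
    obtain ⟨l, hl, hp⟩ := List.prefix_filter_iff.mp (List.take_prefix p (w.filter P))
    rw [hp, List.count_filter ha, List.count_filter hb, List.prefix_iff_eq_take.mp hl]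
    exact h _

theorem wordEps_eq_zero_iff (i : ℕ) (w : List ℕ) :
    wordEps i w = 0 ↔ ∀ k, (w.take k).count (i + 1) ≤ (w.take k).count i := by
  rw [wordEps, ← Nat.le_zero, Finset.sup_le_iff]
  simp only [Finset.mem_range, Nat.le_zero, Nat.sub_eq_zero_iff_le]
  refine ⟨fun h k => ?_, fun h k _ => h k⟩
  rcases le_or_gt k w.length with hk | hk
  · exact h k (by omega)
  · simpa only [List.take_of_length_le hk.le, List.take_length] using h w.length (by omega)

theorem wordEps_eq_zero_of_not_mem {i : ℕ} {w : List ℕ} (h : i + 1 ∉ w) : wordEps i w = 0 := by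
  simp [wordEps, List.count_eq_zero_of_not_mem fun hm => h (List.mem_of_mem_take hm)]

theorem wordPhi_eq_zero_of_not_mem {i : ℕ} {w : List ℕ} (h : i ∉ w) : wordPhi i w = 0 := by
  simp [wordPhi, List.count_eq_zero_of_not_mem fun hm => h (List.mem_of_mem_drop hm)]

end Words

section Diagrams

theorem sum_Ioo_eq_add_sum_Ioo_succ {c : ℕ → ℕ} {N : ℕ} (hc : ∀ k, N ≤ k → c k = 0)
    (i : ℕ) : ∑ k ∈ Finset.Ioo i N, c k = c (i + 1) + ∑ k ∈ Finset.Ioo (i + 1) N, c k := by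
  rcases lt_or_ge (i + 1) N with h | h
  · have hIoo : Finset.Ioo i N = insert (i + 1) (Finset.Ioo (i + 1) N) := by
      ext k; simp only [Finset.mem_Ioo, Finset.mem_insert]; omega
    rw [hIoo, Finset.sum_insert (by simp)]
  · have hvan : ∀ j, i ≤ j → ∑ k ∈ Finset.Ioo j N, c k = 0 := fun j hj =>
      Finset.sum_eq_zero fun k hk => hc k (by rw [Finset.mem_Ioo] at hk; omega)
    rw [hc _ h, hvan i le_rfl, hvan (i + 1) (by omega)]

/-- Row `i` has one box for each column of height `k > i`, of which there are `c k`. -/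
def diagramOfCoord (c : ℕ → ℕ) (N : ℕ) : YoungDiagram :=
  YoungDiagram.ofRowLens (List.ofFn fun i : Fin N => ∑ k ∈ Finset.Ioo (i : ℕ) N, c k)
    (Antitone.sortedGE_ofFn fun _ _ hij =>
      Finset.sum_le_sum_of_subset (Finset.Ioo_subset_Ioo_left hij))

theorem rowLen_diagramOfCoord (c : ℕ → ℕ) (N i : ℕ) :
    (diagramOfCoord c N).rowLen i = ∑ k ∈ Finset.Ioo i N, c k := by
  refine eq_of_forall_lt_iff fun j => ?_
  rw [← YoungDiagram.mem_iff_lt_rowLen, diagramOfCoord, YoungDiagram.mem_ofRowLens]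
  rcases lt_or_ge i N with hi | hi
  · simp [hi]
  · simp [hi.not_gt]

theorem coord_diagramOfCoord {c : ℕ → ℕ} {N : ℕ} (hc : ∀ k, N ≤ k → c k = 0) {i : ℕ}
    (hi : 1 ≤ i) : coord (diagramOfCoord c N) i = c i := by
  obtain ⟨i, rfl⟩ := Nat.exists_eq_add_of_le' hi
  simp [coord, rowLen_diagramOfCoord, sum_Ioo_eq_add_sum_Ioo_succ hc i]

theorem evenParts_diagramOfCoord {c : ℕ → ℕ} (hc : ∀ k, 1 ≤ k → Even (c k)) (N : ℕ) :
    EvenParts (diagramOfCoord c N) := fun i => by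
  rw [rowLen_diagramOfCoord]
  exact Finset.even_sum _ fun k hk => hc k (by simp at hk; omega)

theorem evenMult_diagramOfCoord {c : ℕ → ℕ} {N : ℕ} (hc : ∀ k, N ≤ k → c k = 0)
    (hodd : ∀ k, Odd k → c k = 0) : EvenMult (diagramOfCoord c N) := fun i => by
  rw [rowLen_diagramOfCoord, rowLen_diagramOfCoord, sum_Ioo_eq_add_sum_Ioo_succ hc,
    hodd _ (odd_two_mul_add_one i), zero_add]

theorem coord_eq_zero_of_evenMult {δ : YoungDiagram} (hδ : EvenMult δ) {i : ℕ} (hi : Odd i) :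
    coord δ i = 0 := by
  obtain ⟨j, rfl⟩ := hi
  simp [coord, hδ j]

theorem even_coord_of_evenParts {ν : YoungDiagram} (hν : EvenParts ν) (i : ℕ) :
    Even (coord ν i) :=
  (Nat.even_sub (ν.rowLen_anti _ _ (Nat.sub_le i 1))).mpr (iff_of_true (hν _) (hν _))

end Diagrams

section Tableaux

variable {lam : YoungDiagram} (T : SemistandardYoungTableau lam)

theorem muBcoord_of_odd {i : ℕ} (hi : Odd i) : muBcoord T i = 0 :=
  if_neg fun h => Nat.not_odd_iff_even.mpr h.1 hi

theorem even_phi_add_muBcoord_of_even {i : ℕ} (he : Even i) (hi : 1 ≤ i) :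
    Even (phi i T + muBcoord T i) := by
  rw [muBcoord, if_pos ⟨he, hi⟩]
  exact ⟨(phi i T + phi i T % 2) / 2, by omega⟩

theorem exists_phi_eps_muBcoord_eq_zero_of_le :
    ∃ N, ∀ i, N ≤ i → phi i T = 0 ∧ eps i T = 0 ∧ muBcoord T i = 0 := by
  refine ⟨(jword T).sum + 1, fun i hi => ?_⟩
  have hnot : ∀ k, i ≤ k → k ∉ jword T := fun k hk hm => by
    have := List.le_sum_of_mem hm; omega
  have hphi : phi i T = 0 := wordPhi_eq_zero_of_not_mem (hnot i le_rfl)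
  refine ⟨hphi, wordEps_eq_zero_of_not_mem (hnot (i + 1) (by omega)), ?_⟩
  simp [muBcoord, hphi]

theorem reverseLattice_iff_eps_odd_eq_zero :
    (∀ i, 1 ≤ i → ∀ p,
        (((jword T).filter fun a => decide (a = 2 * i - 1 ∨ a = 2 * i)).take p).count (2 * i) ≤
          (((jword T).filter fun a => decide (a = 2 * i - 1 ∨ a = 2 * i)).take p).count
            (2 * i - 1)) ↔
      ∀ i, Odd i → eps i T = 0 := by
  have hidx : ∀ j, 2 * (j + 1) - 1 = 2 * j + 1 ∧ 2 * (j + 1) = 2 * j + 1 + 1 := fun j => by omega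
  constructor
  · rintro h i ⟨j, rfl⟩
    have := h (j + 1) (by omega)
    rwa [(hidx j).1, (hidx j).2, forall_count_take_filter_le_iff (by simp) (by simp),
      ← wordEps_eq_zero_iff] at this
  · intro h i hi
    obtain ⟨j, rfl⟩ := Nat.exists_eq_add_of_le' hi
    rw [(hidx j).1, (hidx j).2, forall_count_take_filter_le_iff (by simp) (by simp),
      ← wordEps_eq_zero_iff]
    exact h _ (odd_two_mul_add_one j)

theorem eps_odd_eq_zero_and_even_of_distinguished {μ : YoungDiagram} (h : Distinguished T μ) :
    (∀ i, Odd i → eps i T = 0) ∧ ∀ i, 1 ≤ i → Even (phi i T + muBcoord T i) := by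
  obtain ⟨ν, δ, hν, hδ, hphi, heps⟩ := h
  have hodd : ∀ i, Odd i → eps i T = 0 ∧ coord μ i = 0 := fun i hi => by
    have := heps i hi.pos
    rw [coord_eq_zero_of_evenMult hδ hi] at this
    omega
  refine ⟨fun i hi => (hodd i hi).1, fun i hi => ?_⟩
  rcases Nat.even_or_odd i with he | ho
  · exact even_phi_add_muBcoord_of_even T he hi
  · have := even_coord_of_evenParts hν i
    rwa [hphi i hi, (hodd i ho).2, ← muBcoord_of_odd T ho] at this

theorem exists_distinguished_of_eps_odd_eq_zero (heps : ∀ i, Odd i → eps i T = 0)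
    (heven : ∀ i, 1 ≤ i → Even (phi i T + muBcoord T i)) :
    ∃ μ, Distinguished T μ := by
  obtain ⟨N, hN⟩ := exists_phi_eps_muBcoord_eq_zero_of_le T
  have hμ : ∀ k, N ≤ k → muBcoord T k = 0 := fun k hk => (hN k hk).2.2
  have hν : ∀ k, N ≤ k → phi k T + muBcoord T k = 0 := fun k hk => by simp [hN k hk]
  have hδ : ∀ k, N ≤ k → eps k T + muBcoord T k = 0 := fun k hk => by simp [hN k hk]
  refine ⟨diagramOfCoord (muBcoord T) N, diagramOfCoord (fun k => phi k T + muBcoord T k) N,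
    diagramOfCoord (fun k => eps k T + muBcoord T k) N, evenParts_diagramOfCoord heven N,
    evenMult_diagramOfCoord hδ fun k hk => by simp [heps k hk, muBcoord_of_odd T hk],
    fun i hi => ?_, fun i hi => ?_⟩
  · rw [coord_diagramOfCoord hν hi, coord_diagramOfCoord hμ hi]
  · rw [coord_diagramOfCoord hδ hi, coord_diagramOfCoord hμ hi]

end Tableaux

theorem distinguished_iff_reverse_lattice_general (lam : YoungDiagram)
    (T : SemistandardYoungTableau lam) :
    (∃ μ : YoungDiagram, Distinguished T μ) ↔
      ((∀ i, 1 ≤ i → ∀ p,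
          (((jword T).filter fun a => decide (a = 2 * i - 1 ∨ a = 2 * i)).take p).count
              (2 * i) ≤
            (((jword T).filter fun a => decide (a = 2 * i - 1 ∨ a = 2 * i)).take p).count
              (2 * i - 1)) ∧
        (∀ i, 1 ≤ i → Even (phi i T + muBcoord T i))) := by
  rw [reverseLattice_iff_eps_odd_eq_zero]
  exact ⟨fun ⟨_, h⟩ => eps_odd_eq_zero_and_even_of_distinguished T h,
    fun h => exists_distinguished_of_eps_odd_eq_zero T h.1 h.2⟩

/-- A semistandard tableau `T` of shape `λ` with positive entries is
distinguished if and only if, for every `i ≥ 1`, the skew tableau obtained by keeping only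
the letters `2i-1` and `2i` in `T` is a reverse lattice skew tableau (its Japanese reading
word — the corresponding subword of the Japanese reading word of `T` — has, in each left
factor, at most as many letters `2i` as letters `2i-1`), and all rows of the partition
`θ(T) = φ(T) + μ_T` have even lengths (equivalently, all the coefficients of `θ(T)` in the
basis of fundamental weights are even). -/
theorem distinguished_iff_reverse_lattice (lam : YoungDiagram)
    (T : SemistandardYoungTableau lam) (hpos : PosEntries T) :
    (∃ μ : YoungDiagram, Distinguished T μ) ↔
      ((∀ i, 1 ≤ i → ∀ p,
          (((jword T).filter fun a => decide (a = 2 * i - 1 ∨ a = 2 * i)).take p).count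
              (2 * i) ≤
            (((jword T).filter fun a => decide (a = 2 * i - 1 ∨ a = 2 * i)).take p).count
              (2 * i - 1)) ∧
        (∀ i, 1 ≤ i → Even (phi i T + muBcoord T i))) :=
  distinguished_iff_reverse_lattice_general lam T

end GE
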